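/- arXiv:1411.3734 — 4 statements merged into one kernel-verified Lean document; each statement's English description precedes it below -/
import Mathlib

section
/- Let L and H be Lie algebras over a field F and suppose φ : U(L) → U(H) is an isomorphism of F-algebras. Then there exists an algebra isomorphism ψ : U(L) → U(H) satisfying ψ(ω(L)) = ω(H), where ω denotes the augmentation ideal. -/
open UniversalEnvelopingAlgebra

attribute [local instance 100] LieRing.ofAssociativeRing

noncomputable def augmentation (F : Type*) (L : Type*) [Field F] [LieRing L] [LieAlgebra F L] :
    UniversalEnvelopingAlgebra F L →ₐ[F] F :=
  UniversalEnvelopingAlgebra.lift F (0 : L →ₗ⁅F⁆ F)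

noncomputable def augIdeal (F : Type*) (L : Type*) [Field F] [LieRing L] [LieAlgebra F L] :
    Submodule F (UniversalEnvelopingAlgebra F L) :=
  LinearMap.ker (augmentation F L).toLinearMap

/-!
Any character `θ` of `U(H)` is the augmentation twisted by an automorphism: for `c = θ ∘ ι`,
a linear form vanishing on `[H, H]`, the assignment `h ↦ h + c(h)` extends to an automorphism
`σ_c` of `U(H)` (with inverse `σ_{-c}`), and `ε_H ∘ σ_c = θ`. Applying this to
`θ = ε_L ∘ φ⁻¹`, the isomorphism `σ_c ∘ φ` intertwines the augmentations, hence maps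
`ω(L) = ker ε_L` onto `ω(H) = ker ε_H`.
-/

theorem Submodule.map_ker_eq_ker_of_comp_eq {R M N P : Type*} [Semiring R]
    [AddCommMonoid M] [AddCommMonoid N] [AddCommMonoid P] [Module R M] [Module R N]
    [Module R P] (e : M ≃ₗ[R] N) {f : M →ₗ[R] P} {g : N →ₗ[R] P}
    (h : g ∘ₗ (e : M →ₗ[R] N) = f) :
    Submodule.map (e : M →ₗ[R] N) (LinearMap.ker f) = LinearMap.ker g := by
  rw [← h, LinearMap.ker_comp, Submodule.map_comap_eq_of_surjective e.surjective]

theorem LinearMap.neg_apply_lie_eq_zero {R H : Type*} [CommRing R] [LieRing H] [LieAlgebra R H]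
    {c : H →ₗ[R] R} (hc : ∀ x y : H, c ⁅x, y⁆ = 0) (x y : H) : (-c) ⁅x, y⁆ = 0 := by
  rw [LinearMap.neg_apply, hc, neg_zero]

namespace UniversalEnvelopingAlgebra

variable {R H : Type*} [CommRing R] [LieRing H] [LieAlgebra R H]

noncomputable def shiftLieHom (c : H →ₗ[R] R) (hc : ∀ x y : H, c ⁅x, y⁆ = 0) :
    H →ₗ⁅R⁆ UniversalEnvelopingAlgebra R H where
  toFun h := ι R h + algebraMap R _ (c h)
  map_add' x y := by simp only [map_add]; abel
  map_smul' r x := by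
    simp only [map_smul, Algebra.smul_def, Algebra.algebraMap_self, RingHom.id_apply, map_mul,
      mul_add]
  map_lie' {x y} := by
    simp only [Ring.lie_def, LieHom.map_lie, hc, map_zero, add_zero,
      Algebra.algebraMap_eq_smul_one, mul_add, add_mul, smul_mul_assoc, mul_smul_comm,
      mul_one, one_mul, smul_add, smul_smul, mul_comm (c y) (c x)]
    abel

noncomputable def shiftAlgHom (c : H →ₗ[R] R) (hc : ∀ x y : H, c ⁅x, y⁆ = 0) :
    UniversalEnvelopingAlgebra R H →ₐ[R] UniversalEnvelopingAlgebra R H :=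
  lift R (shiftLieHom c hc)

theorem shiftAlgHom_ι (c : H →ₗ[R] R) (hc : ∀ x y : H, c ⁅x, y⁆ = 0) (h : H) :
    shiftAlgHom c hc (ι R h) = ι R h + algebraMap R _ (c h) :=
  lift_ι_apply R _ h

theorem shiftAlgHom_comp_shiftAlgHom_neg (c : H →ₗ[R] R) (hc : ∀ x y : H, c ⁅x, y⁆ = 0) :
    (shiftAlgHom c hc).comp (shiftAlgHom (-c) (LinearMap.neg_apply_lie_eq_zero hc)) =
      AlgHom.id R _ := by
  ext x
  change shiftAlgHom c hc (shiftAlgHom (-c) _ (ι R x)) = ι R x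
  rw [shiftAlgHom_ι, map_add, AlgHom.commutes, shiftAlgHom_ι, LinearMap.neg_apply, map_neg,
    add_neg_cancel_right]

noncomputable def shiftEquiv (c : H →ₗ[R] R) (hc : ∀ x y : H, c ⁅x, y⁆ = 0) :
    UniversalEnvelopingAlgebra R H ≃ₐ[R] UniversalEnvelopingAlgebra R H :=
  AlgEquiv.ofAlgHom (shiftAlgHom c hc) (shiftAlgHom (-c) (LinearMap.neg_apply_lie_eq_zero hc))
    (shiftAlgHom_comp_shiftAlgHom_neg c hc)
    (by simpa using shiftAlgHom_comp_shiftAlgHom_neg (-c) (LinearMap.neg_apply_lie_eq_zero hc))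

theorem shiftEquiv_ι (c : H →ₗ[R] R) (hc : ∀ x y : H, c ⁅x, y⁆ = 0) (h : H) :
    shiftEquiv c hc (ι R h) = ι R h + algebraMap R _ (c h) :=
  shiftAlgHom_ι c hc h

end UniversalEnvelopingAlgebra

theorem augmentation_ι (F : Type*) {H : Type*} [Field F] [LieRing H] [LieAlgebra F H] (h : H) :
    augmentation F H (ι F h) = 0 :=
  lift_ι_apply F _ h

theorem exists_algEquiv_augmentation_comp_eq {F H : Type*} [Field F] [LieRing H]
    [LieAlgebra F H] (θ : UniversalEnvelopingAlgebra F H →ₐ[F] F) :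
    ∃ σ : UniversalEnvelopingAlgebra F H ≃ₐ[F] UniversalEnvelopingAlgebra F H,
      (augmentation F H).comp (σ : UniversalEnvelopingAlgebra F H →ₐ[F] _) = θ := by
  let c : H →ₗ[F] F := θ.toLinearMap ∘ₗ (ι F : H →ₗ⁅F⁆ _).toLinearMap
  have hc : ∀ x y : H, c ⁅x, y⁆ = 0 := fun x y => by
    simp only [c, LinearMap.comp_apply, LieHom.coe_toLinearMap, AlgHom.toLinearMap_apply,
      LieHom.map_lie, Ring.lie_def, map_sub, map_mul, mul_comm, sub_self]
  refine ⟨shiftEquiv c hc, ?_⟩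
  ext h
  change augmentation F H (shiftEquiv c hc (ι F h)) = θ (ι F h)
  rw [shiftEquiv_ι, map_add, augmentation_ι, zero_add, AlgHom.commutes]
  rfl

/-- if `U(L) ≅ U(H)` as `F`-algebras, then there is an algebra isomorphism
`ψ : U(L) → U(H)` with `ψ(ω(L)) = ω(H)`. -/
theorem exists_algEquiv_mapping_augIdeal (F : Type*) (L H : Type*) [Field F]
    [LieRing L] [LieAlgebra F L] [LieRing H] [LieAlgebra F H]
    (φ : UniversalEnvelopingAlgebra F L ≃ₐ[F] UniversalEnvelopingAlgebra F H) :
    ∃ ψ : UniversalEnvelopingAlgebra F L ≃ₐ[F] UniversalEnvelopingAlgebra F H,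
      Submodule.map (ψ : UniversalEnvelopingAlgebra F L →ₗ[F] UniversalEnvelopingAlgebra F H)
        (augIdeal F L) = augIdeal F H := by
  obtain ⟨σ, hσ⟩ := exists_algEquiv_augmentation_comp_eq
    ((augmentation F L).comp (φ.symm : UniversalEnvelopingAlgebra F H →ₐ[F] _))
  refine ⟨φ.trans σ, Submodule.map_ker_eq_ker_of_comp_eq (φ.trans σ).toLinearEquiv ?_⟩
  ext u
  simpa using congrArg (· (φ u)) hσ
end

section
/- Let L and H be restricted Lie algebras over a field of characteristic p > 0 and suppose φ : u(L) → u(H) is an algebra isomorphism. Then the map η : L → u(H) defined by η(x) = φ(x) − ε_H(φ(x))·1 is a restricted Lie algebra homomorphism, and its extension to an algebra homomorphism u(L) → u(H) is an isomorphism mapping ω(L) onto ω(H). -/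
open UniversalEnvelopingAlgebra
open scoped TensorProduct

attribute [local instance 100] LieRing.ofAssociativeRing

/-! Infrastructure: restricted Lie algebras and their restricted enveloping algebras
(not yet in Mathlib). -/

section Restricted

variable (F : Type*) [Field F] (p : ℕ) (L : Type*) [LieRing L] [LieAlgebra F L]

/-- The element `ad(λ·x + y)^{p-1}(x)` of `F[λ] ⊗ L`, whose `λ^{i-1}`-coefficient is
`i·sᵢ(x,y)`. -/
noncomputable def adLambdaPow (x y : L) : Polynomial F ⊗[F] L :=
  ((LieAlgebra.ad (Polynomial F) (Polynomial F ⊗[F] L)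
      (Polynomial.X ⊗ₜ[F] x + 1 ⊗ₜ[F] y)) ^ (p - 1)) (1 ⊗ₜ[F] x)

/-- Extraction of the coefficient of `λ^i` from an element of `F[λ] ⊗ L`. -/
noncomputable def lamCoeff (i : ℕ) : Polynomial F ⊗[F] L →ₗ[F] L :=
  (TensorProduct.lid F L).toLinearMap ∘ₗ LinearMap.rTensor L (Polynomial.lcoeff F i)

/-- The element `sᵢ(x,y)`, defined by: `i·sᵢ(x,y)` is the coefficient of `λ^{i-1}` in
`ad(λ·x + y)^{p-1}(x)`. -/
noncomputable def sElt (i : ℕ) (x y : L) : L :=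
  ((i : F)⁻¹) • lamCoeff F L (i - 1) (adLambdaPow F p L x y)

/-- A `[p]`-mapping on the Lie algebra `L`, making `(L, [p])` a restricted Lie algebra:
(1) `ad(x^{[p]}) = (ad x)^p`; (2) `(α·x)^{[p]} = α^p·x^{[p]}`;
(3) `(x+y)^{[p]} = x^{[p]} + y^{[p]} + Σ_{i=1}^{p-1} sᵢ(x,y)`. -/
structure PMapOn where
  toFun : L → L
  ad_pow : ∀ x : L, LieAlgebra.ad F L (toFun x) = (LieAlgebra.ad F L x) ^ p
  smul_pow : ∀ (a : F) (x : L), toFun (a • x) = a ^ p • toFun x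
  add_pow : ∀ x y : L, toFun (x + y) =
    toFun x + toFun y + ∑ i ∈ Finset.Icc 1 (p - 1), sElt F p L i x y

variable {F p L} (pm : PMapOn F p L)

/-- The relation `x^{[p]} ∼ x^p` on `U(L)` whose quotient is the restricted enveloping
algebra `u(L)`. -/
def uRel (a b : UniversalEnvelopingAlgebra F L) : Prop :=
  ∃ x : L, a = ι F (pm.toFun x) ∧ b = (ι F x) ^ p

/-- The restricted enveloping algebra `u(L) = U(L)/(x^{[p]} - x^p)`. -/
def uEnv := RingQuot (uRel pm)

noncomputable instance : Ring (uEnv pm) := inferInstanceAs (Ring (RingQuot (uRel pm)))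
noncomputable instance : Algebra F (uEnv pm) :=
  inferInstanceAs (Algebra F (RingQuot (uRel pm)))

/-- The canonical map `L → u(L)` (injective by Jacobson's PBW theorem). -/
noncomputable def uIota : L →ₗ[F] uEnv pm :=
  (RingQuot.mkAlgHom F (uRel pm)).toLinearMap ∘ₗ (ι F : L →ₗ⁅F⁆ _).toLinearMap

/-- The augmentation map `u(L) → F`. -/
noncomputable def uAug (hp : p ≠ 0) : uEnv pm →ₐ[F] F :=
  RingQuot.liftAlgHom F
    ⟨UniversalEnvelopingAlgebra.lift F (0 : L →ₗ⁅F⁆ F), by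
      rintro a b ⟨x, rfl, rfl⟩
      simp [UniversalEnvelopingAlgebra.lift_ι_apply, zero_pow hp]⟩

/-- The augmentation ideal `ω(L)` of `u(L)`. -/
noncomputable def uAugIdeal (hp : p ≠ 0) : Submodule F (uEnv pm) :=
  LinearMap.ker (uAug pm hp).toLinearMap

/-- The `n`-th dimension subalgebra `D_n(L) = L ∩ ω(L)^n`. -/
noncomputable def dimSubalgebra (hp : p ≠ 0) (n : ℕ) : Submodule F L :=
  Submodule.comap (uIota pm) (uAugIdeal pm hp ^ n)

/-- The restricted subalgebra of `L` generated by a subset `X`: the smallest `F`-submodule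
containing `X` that is closed under the Lie bracket and under the `p`-map. -/
def restrictedSpan (X : Set L) : Submodule F L :=
  sInf {S : Submodule F L | X ⊆ S ∧ (∀ a ∈ S, ∀ b ∈ S, ⁅a, b⁆ ∈ S) ∧
    ∀ a ∈ S, pm.toFun a ∈ S}

end Restricted

/-! The character `ε_H ∘ φ` of `u(L)` restricts to a linear form `c` on `L` that kills brackets
and satisfies `c(x^{[p]}) = c(x)^p`. Since scalars are central and `u(L)` has characteristic `p`,
`ι x ↦ ι x + c(x)` extends to an endomorphism `τ` of `u(L)`, invertible with inverse the
translation by `-c`. Then `ψ = φ ∘ τ⁻¹` sends `ι x` to `η x`, so `η` inherits linearity,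
brackets and `p`-th powers from `ψ`; and `ε_H ∘ ψ = ε_L` because both vanish on `L`, which
generates `u(L)`. -/

section RestrictedEnvelope

variable {F : Type*} [Field F] {p : ℕ} {L : Type*} [LieRing L] [LieAlgebra F L]
variable (pm : PMapOn F p L)

lemma uIota_lie (x y : L) :
    uIota pm ⁅x, y⁆ = uIota pm x * uIota pm y - uIota pm y * uIota pm x := by
  show RingQuot.mkAlgHom F (uRel pm) (ι F ⁅x, y⁆) = _
  rw [LieHom.map_lie, LieRing.of_associative_ring_bracket, map_sub, map_mul, map_mul]
  rfl

lemma uIota_pmap (x : L) : uIota pm (pm.toFun x) = uIota pm x ^ p := by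
  show RingQuot.mkAlgHom F (uRel pm) (ι F (pm.toFun x)) = _
  rw [RingQuot.mkAlgHom_rel F (⟨x, rfl, rfl⟩ : uRel pm _ _), map_pow]
  rfl

lemma uAug_uIota (hp : p ≠ 0) (x : L) : uAug pm hp (uIota pm x) = 0 := by
  show RingQuot.liftAlgHom F _ (RingQuot.mkAlgHom F (uRel pm) (ι F x)) = 0
  rw [RingQuot.liftAlgHom_mkAlgHom_apply, lift_ι_apply]
  rfl

lemma uEnv_algHom_ext {A : Type*} [Ring A] [Algebra F A] {f g : uEnv pm →ₐ[F] A}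
    (h : ∀ x : L, f (uIota pm x) = g (uIota pm x)) : f = g :=
  RingQuot.ringQuot_ext' _ _ _ <| hom_ext F <| LieHom.ext h

noncomputable def uLift {A : Type*} [Ring A] [Algebra F A] (f : L →ₗ⁅F⁆ A)
    (hf : ∀ x : L, f (pm.toFun x) = f x ^ p) : uEnv pm →ₐ[F] A :=
  RingQuot.liftAlgHom F ⟨lift F f, by
    rintro _ _ ⟨x, rfl, rfl⟩
    rw [map_pow, lift_ι_apply, lift_ι_apply, hf]⟩

lemma uLift_uIota {A : Type*} [Ring A] [Algebra F A] (f : L →ₗ⁅F⁆ A)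
    (hf : ∀ x : L, f (pm.toFun x) = f x ^ p) (x : L) : uLift pm f hf (uIota pm x) = f x := by
  show RingQuot.liftAlgHom F _ (RingQuot.mkAlgHom F (uRel pm) (ι F x)) = f x
  rw [RingQuot.liftAlgHom_mkAlgHom_apply, lift_ι_apply]

lemma uEnv_algebraMap_injective (hp : p ≠ 0) : Function.Injective (algebraMap F (uEnv pm)) :=
  Function.LeftInverse.injective (g := uAug pm hp) (uAug pm hp).commutes

instance uEnv_charP [Fact p.Prime] [CharP F p] : CharP (uEnv pm) p :=
  charP_of_injective_algebraMap (uEnv_algebraMap_injective pm (Fact.out : p.Prime).ne_zero) p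

end RestrictedEnvelope

section Translation

variable {F : Type*} [Field F] {p : ℕ} {L : Type*} [LieRing L] [LieAlgebra F L]
variable (pm : PMapOn F p L)

/-- The scalar summand is central, so it does not change brackets. -/
noncomputable def uIotaAddScalar (d : L →ₗ[F] F) (hd : ∀ x y : L, d ⁅x, y⁆ = 0) :
    L →ₗ⁅F⁆ uEnv pm :=
  { uIota pm + Algebra.linearMap F (uEnv pm) ∘ₗ d with
    map_lie' := fun {x y} => by
      simp only [AddHom.toFun_eq_coe, LinearMap.coe_toAddHom, LinearMap.add_apply,
        LinearMap.comp_apply, Algebra.linearMap_apply, hd, map_zero, add_zero, uIota_lie,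
        LieRing.of_associative_ring_bracket, add_mul, mul_add]
      rw [Algebra.commutes (d x), Algebra.commutes (d y) (uIota pm x),
        Algebra.commutes (d x) (algebraMap F _ (d y))]
      abel }

lemma uIotaAddScalar_apply (d : L →ₗ[F] F) (hd : ∀ x y : L, d ⁅x, y⁆ = 0) (x : L) :
    uIotaAddScalar pm d hd x = uIota pm x + algebraMap F (uEnv pm) (d x) :=
  rfl

variable [Fact p.Prime] [CharP F p]

noncomputable def uTranslate (d : L →ₗ[F] F) (hd_lie : ∀ x y : L, d ⁅x, y⁆ = 0)
    (hd_pmap : ∀ x : L, d (pm.toFun x) = d x ^ p) : uEnv pm →ₐ[F] uEnv pm :=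
  uLift pm (uIotaAddScalar pm d hd_lie) fun x => by
    rw [uIotaAddScalar_apply, uIotaAddScalar_apply, uIota_pmap, hd_pmap, map_pow,
      add_pow_char_of_commute _ (Algebra.commutes _ _).symm]

lemma uTranslate_uIota (d : L →ₗ[F] F) (hd_lie : ∀ x y : L, d ⁅x, y⁆ = 0)
    (hd_pmap : ∀ x : L, d (pm.toFun x) = d x ^ p) (x : L) :
    uTranslate pm d hd_lie hd_pmap (uIota pm x) = uIota pm x + algebraMap F (uEnv pm) (d x) :=
  uLift_uIota pm _ _ x

lemma neg_apply_pmap {d : L →ₗ[F] F} (hd_pmap : ∀ x : L, d (pm.toFun x) = d x ^ p) (x : L) :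
    (-d) (pm.toFun x) = (-d) x ^ p := by
  rw [LinearMap.neg_apply, LinearMap.neg_apply, hd_pmap, neg_pow, neg_one_pow_char, neg_one_mul]

noncomputable def uTranslateEquiv (d : L →ₗ[F] F) (hd_lie : ∀ x y : L, d ⁅x, y⁆ = 0)
    (hd_pmap : ∀ x : L, d (pm.toFun x) = d x ^ p) : uEnv pm ≃ₐ[F] uEnv pm :=
  AlgEquiv.ofAlgHom (uTranslate pm d hd_lie hd_pmap)
    (uTranslate pm (-d) (fun x y => by rw [LinearMap.neg_apply, hd_lie, neg_zero])
      (neg_apply_pmap pm hd_pmap))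
    (uEnv_algHom_ext pm fun x => by simp [uTranslate_uIota])
    (uEnv_algHom_ext pm fun x => by simp [uTranslate_uIota])

lemma uTranslateEquiv_symm_uIota (d : L →ₗ[F] F) (hd_lie : ∀ x y : L, d ⁅x, y⁆ = 0)
    (hd_pmap : ∀ x : L, d (pm.toFun x) = d x ^ p) (x : L) :
    (uTranslateEquiv pm d hd_lie hd_pmap).symm (uIota pm x) =
      uIota pm x - algebraMap F (uEnv pm) (d x) := by
  simp [uTranslateEquiv, uTranslate_uIota, sub_eq_add_neg]

end Translation

lemma map_ker_toLinearMap_of_comp_eq {F A B : Type*} [CommRing F] [Ring A] [Ring B]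
    [Algebra F A] [Algebra F B] (ψ : A ≃ₐ[F] B) {εA : A →ₐ[F] F} {εB : B →ₐ[F] F}
    (h : εB.comp ψ.toAlgHom = εA) :
    Submodule.map (ψ : A →ₗ[F] B) (LinearMap.ker εA.toLinearMap) =
      LinearMap.ker εB.toLinearMap := by
  rw [← h, AlgHom.comp_toLinearMap, LinearMap.ker_comp]
  exact Submodule.map_comap_eq_of_surjective ψ.surjective _

section Normalization

variable {F : Type*} [Field F] {p : ℕ} [Fact p.Prime] [CharP F p]
variable {L : Type*} [LieRing L] [LieAlgebra F L] (pm : PMapOn F p L)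

theorem exists_algEquiv_uIota_eq_sub_character {B : Type*} [Ring B] [Algebra F B]
    (φ : uEnv pm ≃ₐ[F] B) (ε : B →ₐ[F] F) :
    ∃ ψ : uEnv pm ≃ₐ[F] B,
      (∀ x : L, ψ (uIota pm x) = φ (uIota pm x) - algebraMap F B (ε (φ (uIota pm x)))) ∧
      ε.comp ψ.toAlgHom = uAug pm (Fact.out : p.Prime).ne_zero := by
  let d : L →ₗ[F] F := (ε.comp φ.toAlgHom).toLinearMap ∘ₗ uIota pm
  have hd_lie (x y : L) : d ⁅x, y⁆ = 0 := by
    simp only [d, LinearMap.comp_apply, AlgHom.toLinearMap_apply, uIota_lie, map_sub,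
      map_mul, mul_comm, sub_self]
  have hd_pmap (x : L) : d (pm.toFun x) = d x ^ p := by
    simp only [d, LinearMap.comp_apply, AlgHom.toLinearMap_apply, uIota_pmap, map_pow]
  let ψ := (uTranslateEquiv pm d hd_lie hd_pmap).symm.trans φ
  have hψ (x : L) :
      ψ (uIota pm x) = φ (uIota pm x) - algebraMap F B (ε (φ (uIota pm x))) := by
    simp [ψ, uTranslateEquiv_symm_uIota, d]
  refine ⟨ψ, hψ, uEnv_algHom_ext pm fun x => ?_⟩
  simp [hψ, uAug_uIota]

end Normalization

/-- if `φ : u(L) → u(H)` is an algebra isomorphism, then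
`η : L → u(H)`, `η(x) = φ(x) − ε_H(φ(x))·1`, is a homomorphism of restricted Lie algebras
(where `u(H)` carries `[a,b] = ab − ba` and `a^{[p]} = a^p`), and its extension to an algebra
homomorphism `u(L) → u(H)` is an isomorphism carrying `ω(L)` onto `ω(H)`. -/
theorem eta_restricted_hom_and_extension (F : Type*) [Field F] (p : ℕ) [Fact p.Prime]
    [CharP F p] (L H : Type*) [LieRing L] [LieAlgebra F L] [LieRing H] [LieAlgebra F H]
    (pmL : PMapOn F p L) (pmH : PMapOn F p H) (φ : uEnv pmL ≃ₐ[F] uEnv pmH) :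

    let η : L → uEnv pmH := fun x => φ (uIota pmL x) -
      algebraMap F (uEnv pmH) (uAug pmH (Fact.out : p.Prime).ne_zero (φ (uIota pmL x)))
    (∀ (a : F) (x y : L), η (a • x + y) = a • η x + η y) ∧
    (∀ x y : L, η ⁅x, y⁆ = η x * η y - η y * η x) ∧
    (∀ x : L, η (pmL.toFun x) = (η x) ^ p) ∧
    ∃ ψ : uEnv pmL ≃ₐ[F] uEnv pmH,
      (∀ x : L, ψ (uIota pmL x) = η x) ∧
      Submodule.map (ψ : uEnv pmL →ₗ[F] uEnv pmH)
          (uAugIdeal pmL (Fact.out : p.Prime).ne_zero) =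
        uAugIdeal pmH (Fact.out : p.Prime).ne_zero := by
  intro η
  obtain ⟨ψ, hψη, hψ_aug⟩ :=
    exists_algEquiv_uIota_eq_sub_character pmL φ (uAug pmH (Fact.out : p.Prime).ne_zero)
  have hη (x : L) : η x = ψ (uIota pmL x) := (hψη x).symm
  refine ⟨fun a x y => ?_, fun x y => ?_, fun x => ?_, ψ, hψη,
    map_ker_toLinearMap_of_comp_eq ψ hψ_aug⟩
  · simp only [hη, map_add, map_smul]
  · rw [hη, hη, hη, uIota_lie, map_sub, map_mul, map_mul]
  · rw [hη, hη, uIota_pmap, map_pow]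
end

section
/- Let F be a field of characteristic p > 0 and let A = Fx_0 + ... + Fx_p be an abelian Lie algebra of dimension p+1. Define L = A + Fλ + Fπ with brackets [λ, x_i] = x_{i−1}, [π, x_i] = x_{i−p}, [λ, π] = 0 (where x_i = 0 for i < 0), and define H = A + Fλ + Fz with [λ, x_i] = x_{i−1} and z central. Then L and H are both nilpotent of class p+1 and metabelian, the center of L is Fx_0 while the center of H is Fz + Fx_0, so L and H are not isomorphic as Lie algebras. -/
/-!
Basis vectors are indexed by `Fin (p + 1) ⊕ Bool`: `inl i` is `x_i`, `inr false` is `λ` and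
`inr true` is `π` (in `L`) or `z` (in `H`).

Give `x_i` the weight `p - i` and `λ`, `π`, `z` the weight `0`. Every bracket of two basis vectors
raises the weight by at least one, so the `k`-th term of the lower central series lies in the span
of the basis vectors of weight `≥ k`; weights are at most `p`, so `γ_{p+1} = 0`, while `ad λ` walks
`x_p` down to `x_0 ∈ γ_p`. The derived algebra lies in the span of the vectors of weight `≥ 1`,
which are all `x_i`'s and so commute: both algebras are metabelian.

A central element is killed by `ad λ`, which forces its `x_i`-coordinates (`i ≥ 1`) to vanish;
its bracket with `x_1` is its `λ`-coordinate times `x_0`, and in `L` its bracket with `x_p` is its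
`π`-coordinate times `x_0` (here `p ≠ 1` because `p` is prime). So the centres have dimensions
`1` and `2`, and a Lie isomorphism would preserve that dimension.
-/

open Submodule

section Basis

variable {R M ι : Type*} [CommRing R] [AddCommGroup M] [Module R M] (b : Module.Basis ι R M)

theorem Module.Basis.mem_span_image_of_repr_eq_zero {S : Set ι} {m : M}
    (h : ∀ s ∉ S, b.repr m s = 0) : m ∈ span R (b '' S) :=
  b.mem_span_image.mpr fun s hs => by_contra fun hS => (Finsupp.mem_support_iff.mp hs) (h s hS)

theorem Module.Basis.finrank_span_pair [Nontrivial R] {s t : ι} (hst : s ≠ t) :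
    Module.finrank R (span R {b s, b t}) = 2 := by
  have hli : LinearIndependent R ![b s, b t] := by
    rw [LinearIndependent.pair_iff]
    intro x y h
    exact ⟨by simpa [Finsupp.single_apply, hst.symm] using congrArg (b.repr · s) h,
      by simpa [Finsupp.single_apply, hst] using congrArg (b.repr · t) h⟩
  rw [← Matrix.range_cons_cons_empty (b s) (b t) ![], finrank_span_eq_card hli]
  simp

end Basis

section LieBasis

variable {R L L' : Type*} [CommRing R] [LieRing L] [LieAlgebra R L] [LieRing L'] [LieAlgebra R L']

theorem lie_mem_of_mem_span {s t : Set L} {N : Submodule R L}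
    (h : ∀ x ∈ s, ∀ y ∈ t, ⁅x, y⁆ ∈ N) {x y : L} (hx : x ∈ span R s) (hy : y ∈ span R t) :
    ⁅x, y⁆ ∈ N := by
  induction hx, hy using span_induction₂ with
  | mem_mem x y hx hy => exact h x hx y hy
  | zero_left => simp
  | zero_right => simp
  | add_left _ _ _ _ _ _ h₁ h₂ => rw [add_lie]; exact add_mem h₁ h₂
  | add_right _ _ _ _ _ _ h₁ h₂ => rw [lie_add]; exact add_mem h₁ h₂
  | smul_left r _ _ _ _ h => rw [smul_lie]; exact smul_mem _ r h
  | smul_right r _ _ _ _ h => rw [lie_smul]; exact smul_mem _ r h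

theorem LieEquiv.map_center (e : L ≃ₗ⁅R⁆ L') :
    (LieAlgebra.center R L).toSubmodule.map (e.toLinearEquiv : L →ₗ[R] L') =
      (LieAlgebra.center R L').toSubmodule := by
  ext y
  simp only [mem_map, LieSubmodule.mem_toSubmodule, LieModule.mem_maxTrivSubmodule,
    LinearEquiv.coe_coe, LieEquiv.coe_toLinearEquiv]
  constructor
  · rintro ⟨x, hx, rfl⟩ z
    rw [← e.apply_symm_apply z, ← e.map_lie, hx, map_zero]
  · intro hy
    refine ⟨e.symm y, fun z => ?_, by simp⟩
    rw [← e.symm_apply_apply z, ← e.symm.map_lie, hy, map_zero]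

variable {ι : Type*} [Fintype ι] (b : Module.Basis ι R L)

theorem Module.Basis.repr_lie_left (x y : L) (u : ι) :
    b.repr ⁅x, y⁆ u = ∑ s, b.repr x s * b.repr ⁅b s, y⁆ u := by
  conv_lhs => rw [← b.sum_repr x, sum_lie]
  simp [smul_lie]

theorem Module.Basis.repr_lie_right (x y : L) (u : ι) :
    b.repr ⁅x, y⁆ u = ∑ s, b.repr y s * b.repr ⁅x, b s⁆ u := by
  conv_lhs => rw [← b.sum_repr y, lie_sum]
  simp [lie_smul]

theorem Module.Basis.mem_center_of_forall_lie {m : L} (h : ∀ s, ⁅b s, m⁆ = 0) :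
    m ∈ LieAlgebra.center R L :=
  (LieModule.mem_maxTrivSubmodule R L L m).mpr fun x =>
    b.ext_elem fun u => by simp [b.repr_lie_left, h]

end LieBasis

section WeightFiltration

variable {R L ι : Type*} [CommRing R] [LieRing L] [LieAlgebra R L]
variable (b : Module.Basis ι R L) (w : ι → ℕ)

def weightFiltration (k : ℕ) : Submodule R L :=
  span R (b '' {s | k ≤ w s})

variable {b w}

theorem basis_mem_weightFiltration {k : ℕ} {s : ι} (h : k ≤ w s) :
    b s ∈ weightFiltration b w k :=
  subset_span (Set.mem_image_of_mem b h)

theorem weightFiltration_antitone : Antitone (weightFiltration b w) :=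
  fun _ _ hkl => span_mono (Set.image_mono fun _ hs => le_trans hkl hs)

variable (b w) in
theorem weightFiltration_zero : weightFiltration b w 0 = ⊤ := by
  simp [weightFiltration, b.span_eq]

theorem weightFiltration_eq_bot {k : ℕ} (h : ∀ s, w s < k) : weightFiltration b w k = ⊥ := by
  simp [weightFiltration, fun s => (h s).not_ge]

variable (hw : ∀ s t, ⁅b s, b t⁆ ∈ weightFiltration b w (w s + w t + 1))
include hw

theorem lie_mem_weightFiltration {m n : ℕ} {x y : L} (hx : x ∈ weightFiltration b w m)
    (hy : y ∈ weightFiltration b w n) : ⁅x, y⁆ ∈ weightFiltration b w (m + n + 1) := by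
  refine lie_mem_of_mem_span ?_ hx hy
  rintro _ ⟨s, hs : m ≤ w s, rfl⟩ _ ⟨t, ht : n ≤ w t, rfl⟩
  exact weightFiltration_antitone (by omega) (hw s t)

theorem lowerCentralSeries_le_weightFiltration (k : ℕ) :
    (LieModule.lowerCentralSeries R L L k).toSubmodule ≤ weightFiltration b w k := by
  induction k with
  | zero => simp [weightFiltration_zero]
  | succ k ih =>
    rw [LieModule.lowerCentralSeries_succ, LieSubmodule.lieIdeal_oper_eq_linear_span', span_le]
    rintro _ ⟨x, -, y, hy, rfl⟩
    simpa using lie_mem_weightFiltration hw (m := 0) (by simp [weightFiltration_zero]) (ih hy)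

theorem lowerCentralSeries_eq_bot_of_weight_lt {k : ℕ} (h : ∀ s, w s < k) :
    LieModule.lowerCentralSeries R L L k = ⊥ := by
  rw [← LieSubmodule.toSubmodule_eq_bot, ← le_bot_iff, ← weightFiltration_eq_bot h]
  exact lowerCentralSeries_le_weightFiltration hw k

theorem lie_lie_lie_lie_eq_zero (hcomm : ∀ s t, 1 ≤ w s → 1 ≤ w t → ⁅b s, b t⁆ = 0)
    (x y z t : L) : ⁅⁅x, y⁆, ⁅z, t⁆⁆ = 0 := by
  have hderived (x y : L) : ⁅x, y⁆ ∈ weightFiltration b w 1 := by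
    simpa using lie_mem_weightFiltration hw (m := 0) (n := 0)
      (by simp [weightFiltration_zero]) (by simp [weightFiltration_zero])
  rw [← mem_bot R]
  refine lie_mem_of_mem_span ?_ (hderived x y) (hderived z t)
  rintro _ ⟨s, hs : 1 ≤ w s, rfl⟩ _ ⟨t, ht : 1 ≤ w t, rfl⟩
  simp [hcomm s t hs ht]

end WeightFiltration

def chainWeight (p : ℕ) : Fin (p + 1) ⊕ Bool → ℕ :=
  Sum.elim (fun i => p - i) fun _ => 0

theorem chainWeight_lt (p : ℕ) (s : Fin (p + 1) ⊕ Bool) : chainWeight p s < p + 1 := by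
  rcases s with i | s <;> simp [chainWeight]

namespace ChainLieAlgebra

variable {R L : Type*} [CommRing R] [LieRing L] [LieAlgebra R L] {p : ℕ}
variable {b : Module.Basis (Fin (p + 1) ⊕ Bool) R L}
variable (hA : ∀ i j : Fin (p + 1), ⁅b (.inl i), b (.inl j)⁆ = 0)
variable (hlam : ∀ i : Fin (p + 1), ⁅b (.inr false), b (.inl i)⁆ =
      if (i : ℕ) = 0 then 0
      else b (.inl ⟨(i : ℕ) - 1, lt_of_le_of_lt (Nat.sub_le _ _) i.isLt⟩))

include hA in
theorem lie_basis_mem_weightFiltration (hinr : ∀ s t, ⁅b (.inr s), b (.inr t)⁆ = 0)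
    (hlower : ∀ t (i : Fin (p + 1)),
      ⁅b (.inr t), b (.inl i)⁆ ∈ weightFiltration b (chainWeight p) (p - i + 1))
    (s t : Fin (p + 1) ⊕ Bool) :
    ⁅b s, b t⁆ ∈ weightFiltration b (chainWeight p) (chainWeight p s + chainWeight p t + 1) := by
  rcases s with i | s <;> rcases t with j | t
  · simp [hA]
  · rw [← lie_skew, neg_mem_iff]
    simpa [chainWeight] using hlower t i
  · simpa [chainWeight] using hlower s j
  · simp [hinr]

include hA in
theorem lie_basis_eq_zero_of_one_le_chainWeight (s t : Fin (p + 1) ⊕ Bool)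
    (hs : 1 ≤ chainWeight p s) (ht : 1 ≤ chainWeight p t) : ⁅b s, b t⁆ = 0 := by
  rcases s with i | s <;> rcases t with j | t <;> simp_all [chainWeight]

include hlam in
theorem lie_lam_zero : ⁅b (.inr false), b (.inl 0)⁆ = 0 := by
  simpa using hlam 0

include hlam in
theorem lie_lam_succ (j : Fin p) : ⁅b (.inr false), b (.inl j.succ)⁆ = b (.inl j.castSucc) := by
  simp [hlam]
  rfl

include hlam in
theorem lie_lam_mem_weightFiltration (i : Fin (p + 1)) :
    ⁅b (.inr false), b (.inl i)⁆ ∈ weightFiltration b (chainWeight p) (p - i + 1) := by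
  induction i using Fin.cases with
  | zero => simp [lie_lam_zero hlam]
  | succ j =>
    rw [lie_lam_succ hlam]
    exact basis_mem_weightFiltration (by simp [chainWeight]; omega)

include hlam in
theorem basis_mem_lowerCentralSeries (k : ℕ) (hk : k ≤ p) :
    b (.inl ⟨p - k, by omega⟩) ∈ LieModule.lowerCentralSeries R L L k := by
  induction k with
  | zero => simp
  | succ k ih =>
    have hsucc : (⟨p - k, by omega⟩ : Fin (p + 1)) = (⟨p - (k + 1), by omega⟩ : Fin p).succ :=
      Fin.ext (by simp; omega)
    have := LieSubmodule.lie_mem_lie (LieSubmodule.mem_top (b (.inr false))) (ih (by omega))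
    rw [hsucc, lie_lam_succ hlam] at this
    rw [LieModule.lowerCentralSeries_succ]
    exact this

include hlam in
theorem lowerCentralSeries_ne_bot [Nontrivial R] : LieModule.lowerCentralSeries R L L p ≠ ⊥ :=
  fun h => b.ne_zero _ <| by simpa [h] using basis_mem_lowerCentralSeries hlam p le_rfl

include hlam in
theorem repr_lie_lam_castSucc (hlampi : ⁅b (.inr false), b (.inr true)⁆ = 0) (y : L) (j : Fin p) :
    b.repr ⁅b (.inr false), y⁆ (.inl j.castSucc) = b.repr y (.inl j.succ) := by
  rw [b.repr_lie_right]
  simp [Fintype.sum_sum_type, Fin.sum_univ_succ, lie_lam_zero hlam, lie_lam_succ hlam, hlampi,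
    Finsupp.single_apply]

include hA hlam in
theorem repr_lie_succ_castSucc (j : Fin p) (hpi : ⁅b (.inr true), b (.inl j.succ)⁆ = 0) (y : L) :
    b.repr ⁅y, b (.inl j.succ)⁆ (.inl j.castSucc) = b.repr y (.inr false) := by
  rw [b.repr_lie_left]
  simp [Fintype.sum_sum_type, hA, lie_lam_succ hlam, hpi]

include hlam in
theorem repr_inl_succ_eq_zero_of_mem_center (hlampi : ⁅b (.inr false), b (.inr true)⁆ = 0)
    {y : L} (hy : y ∈ LieAlgebra.center R L) (j : Fin p) : b.repr y (.inl j.succ) = 0 := by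
  rw [← repr_lie_lam_castSucc hlam hlampi, (LieModule.mem_maxTrivSubmodule R L L y).mp hy,
    map_zero, Finsupp.zero_apply]

include hA hlam in
theorem repr_lam_eq_zero_of_mem_center (j : Fin p) (hpi : ⁅b (.inr true), b (.inl j.succ)⁆ = 0)
    {y : L} (hy : y ∈ LieAlgebra.center R L) : b.repr y (.inr false) = 0 := by
  rw [← repr_lie_succ_castSucc hA hlam j hpi, ← lie_skew,
    (LieModule.mem_maxTrivSubmodule R L L y).mp hy, neg_zero, map_zero, Finsupp.zero_apply]

section Pi

variable (hpi : ∀ i : Fin (p + 1), ⁅b (.inr true), b (.inl i)⁆ =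
      if (i : ℕ) = p then b (.inl ⟨0, Nat.succ_pos p⟩) else 0)
variable (hlampi : ⁅b (.inr false), b (.inr true)⁆ = 0)

include hlampi in
theorem lie_inr_inr_eq_zero_of_lie_lam_pi (s t : Bool) : ⁅b (.inr s), b (.inr t)⁆ = 0 := by
  cases s <;> cases t <;> simp [hlampi, ← lie_skew (b (.inr true))]

include hpi in
theorem lie_pi_mem_weightFiltration (hp : p ≠ 0) (i : Fin (p + 1)) :
    ⁅b (.inr true), b (.inl i)⁆ ∈ weightFiltration b (chainWeight p) (p - i + 1) := by
  rw [hpi]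
  split_ifs
  · exact basis_mem_weightFiltration (show p - i + 1 ≤ p - 0 by omega)
  · exact zero_mem _

include hA hlam hpi hlampi in
theorem lie_basis_mem_weightFiltration_of_pi (hp : p ≠ 0) (s t : Fin (p + 1) ⊕ Bool) :
    ⁅b s, b t⁆ ∈ weightFiltration b (chainWeight p) (chainWeight p s + chainWeight p t + 1) := by
  refine lie_basis_mem_weightFiltration hA (lie_inr_inr_eq_zero_of_lie_lam_pi hlampi) ?_ s t
  rintro (_ | _) i
  · exact lie_lam_mem_weightFiltration hlam i
  · exact lie_pi_mem_weightFiltration hpi hp i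

include hA hlam hpi hlampi in
theorem center_eq_span_inl_zero (hp : 2 ≤ p) :
    (LieAlgebra.center R L).toSubmodule = span R {b (.inl 0)} := by
  apply le_antisymm
  · intro y hy
    have hy' : ∀ x : L, ⁅y, x⁆ = 0 := fun x => by
      rw [← lie_skew, (LieModule.mem_maxTrivSubmodule R L L y).mp hy, neg_zero]
    have hlam_y : b.repr y (.inr false) = 0 :=
      repr_lam_eq_zero_of_mem_center hA hlam ⟨0, by omega⟩ (by simp [hpi]; omega) hy
    have hpi_y : b.repr y (.inr true) = 0 := by
      have := congrArg (b.repr · (.inl 0)) (hy' (b (.inl (Fin.last p))))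
      rw [b.repr_lie_left] at this
      simpa [Fintype.sum_sum_type, hA, hpi, hlam_y] using this
    rw [← Set.image_singleton]
    refine b.mem_span_image_of_repr_eq_zero ?_
    rintro (i | _ | _) hs
    · induction i using Fin.cases with
      | zero => exact absurd rfl hs
      | succ j => exact repr_inl_succ_eq_zero_of_mem_center hlam hlampi hy j
    · exact hlam_y
    · exact hpi_y
  · rw [span_le, Set.singleton_subset_iff]
    refine b.mem_center_of_forall_lie ?_
    have hp0 : (0 : ℕ) ≠ p := by omega
    rintro (i | _ | _) <;> simp [hA, lie_lam_zero hlam, hpi, hp0]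

end Pi

section Central

variable (hz : ∀ y : L, ⁅b (.inr true), y⁆ = 0)
include hz

theorem lie_inr_inr_eq_zero_of_central (s t : Bool) : ⁅b (.inr s), b (.inr t)⁆ = 0 := by
  cases s <;> cases t <;> simp [hz, ← lie_skew (b (.inr false))]

include hA hlam in
theorem lie_basis_mem_weightFiltration_of_central (s t : Fin (p + 1) ⊕ Bool) :
    ⁅b s, b t⁆ ∈ weightFiltration b (chainWeight p) (chainWeight p s + chainWeight p t + 1) := by
  refine lie_basis_mem_weightFiltration hA (lie_inr_inr_eq_zero_of_central hz) ?_ s t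
  rintro (_ | _) i
  · exact lie_lam_mem_weightFiltration hlam i
  · simp [hz]

include hA hlam in
theorem center_eq_span_inr_true_inl_zero (hp : p ≠ 0) :
    (LieAlgebra.center R L).toSubmodule = span R {b (.inr true), b (.inl 0)} := by
  apply le_antisymm
  · intro y hy
    rw [← Set.image_pair]
    refine b.mem_span_image_of_repr_eq_zero ?_
    rintro (i | _ | _) hs
    · induction i using Fin.cases with
      | zero => exact absurd (by simp) hs
      | succ j =>
        exact repr_inl_succ_eq_zero_of_mem_center hlam (lie_inr_inr_eq_zero_of_central hz false true)
          hy j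
    · exact repr_lam_eq_zero_of_mem_center hA hlam ⟨0, by omega⟩ (hz _) hy
    · exact absurd (by simp) hs
  · rw [span_le, Set.insert_subset_iff, Set.singleton_subset_iff]
    constructor
    · refine b.mem_center_of_forall_lie fun s => ?_
      rw [← lie_skew, hz, neg_zero]
    · refine b.mem_center_of_forall_lie ?_
      rintro (i | _ | _) <;> simp [hA, lie_lam_zero hlam, hz]

end Central

end ChainLieAlgebra

open ChainLieAlgebra

/-- over a field `F` of characteristic `p > 0`, let `L` be the Lie algebra with
basis `x_0, …, x_p, λ, π` and relations `[λ, x_i] = x_{i−1}`, `[π, x_i] = x_{i−p}`,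
`[λ, π] = 0` (`x_i = 0` for `i < 0`, all other brackets of basis vectors zero), and let `H` be
the Lie algebra with basis `x_0, …, x_p, λ, z` with `[λ, x_i] = x_{i−1}` and `z` central.
Then `L` and `H` are both nilpotent of class `p + 1` and metabelian, `Z(L) = F·x_0`,
`Z(H) = F·z + F·x_0`, and `L ≇ H`.
(Basis indexed by `Fin (p+1) ⊕ Bool`: `inl i ↦ x_i`, `inr false ↦ λ`, `inr true ↦ π`
resp. `z`.) -/
theorem counterexample_char_p (F : Type*) [Field F] (p : ℕ) (hp : p ≠ 0) [CharP F p]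
    (L H : Type*) [LieRing L] [LieAlgebra F L] [LieRing H] [LieAlgebra F H]
    (b : Module.Basis (Fin (p + 1) ⊕ Bool) F L) (c : Module.Basis (Fin (p + 1) ⊕ Bool) F H)
    -- relations in L
    (hLA : ∀ i j : Fin (p + 1), ⁅b (.inl i), b (.inl j)⁆ = 0)
    (hLlam : ∀ i : Fin (p + 1), ⁅b (.inr false), b (.inl i)⁆ =
      if (i : ℕ) = 0 then 0
      else b (.inl ⟨(i : ℕ) - 1, lt_of_le_of_lt (Nat.sub_le _ _) i.isLt⟩))
    (hLpi : ∀ i : Fin (p + 1), ⁅b (.inr true), b (.inl i)⁆ =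
      if (i : ℕ) = p then b (.inl ⟨0, Nat.succ_pos p⟩) else 0)
    (hLlampi : ⁅b (.inr false), b (.inr true)⁆ = 0)
    -- relations in H
    (hHA : ∀ i j : Fin (p + 1), ⁅c (.inl i), c (.inl j)⁆ = 0)
    (hHlam : ∀ i : Fin (p + 1), ⁅c (.inr false), c (.inl i)⁆ =
      if (i : ℕ) = 0 then 0
      else c (.inl ⟨(i : ℕ) - 1, lt_of_le_of_lt (Nat.sub_le _ _) i.isLt⟩))
    (hHz : ∀ y : H, ⁅c (.inr true), y⁆ = 0) :
    -- L and H are nilpotent of class p + 1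
    (LieModule.lowerCentralSeries F L L (p + 1) = ⊥ ∧
      LieModule.lowerCentralSeries F L L p ≠ ⊥) ∧
    (LieModule.lowerCentralSeries F H H (p + 1) = ⊥ ∧
      LieModule.lowerCentralSeries F H H p ≠ ⊥) ∧
    -- L and H are metabelian
    (∀ a b' c' d : L, ⁅⁅a, b'⁆, ⁅c', d⁆⁆ = 0) ∧
    (∀ a b' c' d : H, ⁅⁅a, b'⁆, ⁅c', d⁆⁆ = 0) ∧
    -- centres
    (LieAlgebra.center F L).toSubmodule =
      Submodule.span F {b (.inl ⟨0, Nat.succ_pos p⟩)} ∧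
    (LieAlgebra.center F H).toSubmodule =
      Submodule.span F {c (.inr true), c (.inl ⟨0, Nat.succ_pos p⟩)} ∧
    -- L and H are not isomorphic
    ¬Nonempty (L ≃ₗ⁅F⁆ H) := by
  have hp2 : 2 ≤ p := ((CharP.char_is_prime_or_zero F p).resolve_right hp).two_le
  have hwL := lie_basis_mem_weightFiltration_of_pi hLA hLlam hLpi hLlampi hp
  have hwH := lie_basis_mem_weightFiltration_of_central hHA hHlam hHz
  have hZL := center_eq_span_inl_zero hLA hLlam hLpi hLlampi hp2
  have hZH := center_eq_span_inr_true_inl_zero hHA hHlam hHz hp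
  refine ⟨⟨lowerCentralSeries_eq_bot_of_weight_lt hwL (chainWeight_lt p),
      lowerCentralSeries_ne_bot hLlam⟩,
    ⟨lowerCentralSeries_eq_bot_of_weight_lt hwH (chainWeight_lt p),
      lowerCentralSeries_ne_bot hHlam⟩,
    lie_lie_lie_lie_eq_zero hwL (lie_basis_eq_zero_of_one_le_chainWeight hLA),
    lie_lie_lie_lie_eq_zero hwH (lie_basis_eq_zero_of_one_le_chainWeight hHA), hZL, hZH, ?_⟩
  rintro ⟨e⟩
  have hfinrank := e.toLinearEquiv.finrank_map_eq (LieAlgebra.center F L).toSubmodule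
  rw [e.map_center, hZL, hZH, c.finrank_span_pair (by simp), finrank_span_singleton (b.ne_zero _)]
    at hfinrank
  omega
end

section
/- Let F be a field of characteristic p > 0, and let L and H be the (p+3)-dimensional Lie algebras of the previous context (L = A + Fλ + Fπ with [λ,x_i] = x_{i−1}, [π,x_i] = x_{i−p}; H = A + Fλ + Fz with [λ,x_i] = x_{i−1}, z central). Then the linear map Φ : L → U(H) which is the identity on A + Fλ and sends π to z + λ^p is a Lie algebra homomorphism into U(H), and its extension U(L) → U(H) is an algebra isomorphism. Hence U(L) ≅ U(H) although L ≇ H. -/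
/-!
In characteristic `p` one has `ad (a ^ p) = (ad a) ^ p` in every associative algebra, and
`(ad λ) ^ p` sends `x_i` to `x_{i-p}`. Hence inside `U(H)` the element `z + λ^p` brackets with
the `x_i` exactly as `π` does in `L`, and it commutes with `λ`; so `x_i ↦ x_i`, `λ ↦ λ`,
`π ↦ z + λ^p` is a Lie map `L → U(H)`. The same computation makes `z ↦ π - λ^p` a Lie map
`H → U(L)`, and the two induced algebra maps are inverse to each other on generators.
Nevertheless `L ≇ H`: for `p ≥ 2` the centre of `L` is the line `F x_0`, whereas `x_0` and `z`
are linearly independent central elements of `H`.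
-/

open UniversalEnvelopingAlgebra LieAlgebra

section

attribute [local instance 100] LieRing.ofAssociativeRing

variable {R : Type*} [CommRing R] {M N : Type*} [LieRing M] [LieAlgebra R M] [LieRing N]
  [LieAlgebra R N]

theorem LinearMap.map_lie_of_basis {κ : Type*} (b : Module.Basis κ R M) (f : M →ₗ[R] N)
    (h : ∀ i j, f ⁅b i, b j⁆ = ⁅f (b i), f (b j)⁆) (u v : M) : f ⁅u, v⁆ = ⁅f u, f v⁆ := by
  have : (ad R M : M →ₗ[R] Module.End R M).compr₂ f =
      (ad R N : N →ₗ[R] Module.End R N).compl₁₂ f f :=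
    LinearMap.ext_basis b b h
  exact LinearMap.congr_fun₂ this u v

theorem LinearMap.map_lie_of_basis_sum_bool {κ : Type*} (b : Module.Basis (κ ⊕ Bool) R M)
    (f : M →ₗ[R] N) (hll : ∀ i j, f ⁅b (.inl i), b (.inl j)⁆ = ⁅f (b (.inl i)), f (b (.inl j))⁆)
    (hrl : ∀ s i, f ⁅b (.inr s), b (.inl i)⁆ = ⁅f (b (.inr s)), f (b (.inl i))⁆)
    (hrr : f ⁅b (.inr false), b (.inr true)⁆ = ⁅f (b (.inr false)), f (b (.inr true))⁆)
    (u v : M) : f ⁅u, v⁆ = ⁅f u, f v⁆ := by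
  have swap : ∀ m n, f ⁅b m, b n⁆ = ⁅f (b m), f (b n)⁆ → f ⁅b n, b m⁆ = ⁅f (b n), f (b m)⁆ :=
    fun m n h => by rw [← lie_skew, map_neg, h, lie_skew]
  refine f.map_lie_of_basis b (fun m n => ?_) u v
  rcases m with i | s <;> rcases n with j | t
  · exact hll i j
  · exact swap _ _ (hrl t i)
  · exact hrl s j
  · cases s <;> cases t
    · simp only [lie_self, map_zero]
    · exact hrr
    · exact swap _ _ hrr
    · simp only [lie_self, map_zero]

theorem LieHom.ad_pow_map (f : M →ₗ⁅R⁆ N) (x y : M) (k : ℕ) :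
    (ad R N (f x) ^ k) (f y) = f ((ad R M x ^ k) y) := by
  have h := Module.End.commute_pow_left_of_commute
    (f := (f : M →ₗ[R] N)) (g := ad R M x) (g₂ := ad R N (f x)) (by ext; simp) k
  exact LinearMap.congr_fun h y

theorem UniversalEnvelopingAlgebra.lift_comp_lift_eq_id {κ : Type*} (b : Module.Basis κ R M)
    (f : M →ₗ⁅R⁆ UniversalEnvelopingAlgebra R N) (g : N →ₗ⁅R⁆ UniversalEnvelopingAlgebra R M)
    (h : ∀ i, lift R g (f (b i)) = ι R (b i)) :
    (lift R g).comp (lift R f) = AlgHom.id R _ := by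
  have hlin : ((lift R g).comp (lift R f)).toLinearMap ∘ₗ (ι R : M →ₗ⁅R⁆ _).toLinearMap =
      (ι R : M →ₗ⁅R⁆ _).toLinearMap :=
    b.ext fun i => by simpa using h i
  exact hom_ext R (LieHom.ext fun x => by simpa using LinearMap.congr_fun hlin x)

theorem apply_eq_zero_of_mem_center {κ : Type*} (b : Module.Basis κ R M) (v : M)
    {φ ψ : M →ₗ[R] R} (h : ∀ k, ψ ⁅v, b k⁆ = φ (b k)) {u : M} (hu : u ∈ center R M) :
    φ u = 0 := by
  rw [← LinearMap.congr_fun (b.ext (f₁ := ψ ∘ₗ ad R M v) h) u]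
  simp [(LieModule.mem_maxTrivSubmodule R M M u).1 hu v]

theorem lie_pow_expChar (F : Type*) [Field F] (p : ℕ) [ExpChar F p] {A : Type*} [Ring A]
    [Algebra F A] (a w : A) : ⁅a ^ p, w⁆ = (ad F A a ^ p) w := by
  nontriviality A
  have : ExpChar (Module.End F A) p :=
    expChar_of_injective_algebraMap (algebraMap F _).injective p
  rw [ad_eq_lmul_left_sub_lmul_right, Pi.sub_apply,
    sub_pow_expChar_of_commute p (LinearMap.commute_mulLeft_right a a)]
  simp [LieRing.of_associative_ring_bracket]

end

theorem not_nonempty_lieEquiv_of_center_le_span_singleton {F : Type*} [Field F]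
    {L H : Type*} [LieRing L] [LieAlgebra F L] [LieRing H] [LieAlgebra F H] {v : L}
    (hL : (center F L : Submodule F L) ≤ F ∙ v) {κ : Type*} [Fintype κ]
    (hκ : 1 < Fintype.card κ) {y : κ → H} (hy : LinearIndependent F y)
    (hyc : ∀ k, y k ∈ center F H) : ¬Nonempty (L ≃ₗ⁅F⁆ H) := by
  rintro ⟨e⟩
  have hcen : ∀ k, e.symm (y k) ∈ center F L := fun k => by
    rw [LieModule.mem_maxTrivSubmodule]
    intro w
    rw [← e.symm_apply_apply w, ← e.symm.map_lie,
      (LieModule.mem_maxTrivSubmodule F H H _).1 (hyc k), map_zero]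
  have hle : Submodule.span F (Set.range (e.symm ∘ y)) ≤ F ∙ v :=
    Submodule.span_le.2 (Set.range_subset_iff.2 fun k => hL (hcen k))
  have hrank : Module.finrank F (F ∙ v) ≤ 1 := by
    simpa using finrank_span_le_card (R := F) ({v} : Set L)
  have hind : LinearIndependent F (e.symm ∘ y) :=
    hy.map' e.symm.toLinearEquiv.toLinearMap e.symm.toLinearEquiv.ker
  have := Submodule.finrank_mono hle
  rw [finrank_span_eq_card hind] at this
  omega

section Shift

variable {R : Type*} [CommRing R] {M : Type*} [LieRing M] [LieAlgebra R M] {n : ℕ} {lam : M}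
  {x : Fin (n + 1) → M}

theorem ad_pow_apply_of_lie_eq_pred
    (hx : ∀ i : Fin (n + 1), ⁅lam, x i⁆ =
      if (i : ℕ) = 0 then 0 else x ⟨(i : ℕ) - 1, lt_of_le_of_lt (Nat.sub_le _ _) i.isLt⟩)
    (k : ℕ) (i : Fin (n + 1)) :
    (ad R M lam ^ k) (x i) =
      if k ≤ (i : ℕ) then x ⟨(i : ℕ) - k, lt_of_le_of_lt (Nat.sub_le _ _) i.isLt⟩ else 0 := by
  induction k with
  | zero => simp
  | succ k ih =>
    rw [pow_succ', Module.End.mul_apply, ih]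
    split_ifs
    · rw [ad_apply, hx, if_neg (by simp only; omega)]
      exact congrArg x (Fin.ext (by simp only; omega))
    · rw [ad_apply, hx, if_pos (by simp only; omega)]
    · omega
    · exact map_zero _

theorem ad_pow_last_apply_of_lie_eq_pred
    (hx : ∀ i : Fin (n + 1), ⁅lam, x i⁆ =
      if (i : ℕ) = 0 then 0 else x ⟨(i : ℕ) - 1, lt_of_le_of_lt (Nat.sub_le _ _) i.isLt⟩)
    (i : Fin (n + 1)) :
    (ad R M lam ^ n) (x i) = if (i : ℕ) = n then x ⟨0, Nat.succ_pos n⟩ else 0 := by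
  rw [ad_pow_apply_of_lie_eq_pred hx]
  by_cases h : (i : ℕ) = n
  · rw [if_pos h.ge, if_pos h]
    exact congrArg x (Fin.ext (by simp [h]))
  · rw [if_neg (by omega), if_neg h]

end Shift

/-- With `x_i = b (.inl i)` and `λ = b (.inr false)`: the `x_i` commute and `⁅λ, x_i⁆ = x_{i-1}`. -/
structure IsShiftBasis {R : Type*} [CommRing R] {M : Type*} [LieRing M] [LieAlgebra R M] {n : ℕ}
    (b : Module.Basis (Fin (n + 1) ⊕ Bool) R M) : Prop where
  lie_inl_inl : ∀ i j : Fin (n + 1), ⁅b (.inl i), b (.inl j)⁆ = 0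
  lie_inr_false_inl : ∀ i : Fin (n + 1), ⁅b (.inr false), b (.inl i)⁆ =
    if (i : ℕ) = 0 then 0
    else b (.inl ⟨(i : ℕ) - 1, lt_of_le_of_lt (Nat.sub_le _ _) i.isLt⟩)

namespace IsShiftBasis

section

attribute [local instance 100] LieRing.ofAssociativeRing

variable {F : Type*} [Field F] {p : ℕ} {M N : Type*} [LieRing M] [LieAlgebra F M] [LieRing N]
  [LieAlgebra F N] {b : Module.Basis (Fin (p + 1) ⊕ Bool) F M}
  {c : Module.Basis (Fin (p + 1) ⊕ Bool) F N}

theorem lie_ι_pow [ExpChar F p] (hc : IsShiftBasis c) (i : Fin (p + 1)) :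
    ⁅ι F (c (.inr false)) ^ p, ι F (c (.inl i))⁆ =
      if (i : ℕ) = p then ι F (c (.inl ⟨0, Nat.succ_pos p⟩)) else 0 := by
  rw [lie_pow_expChar F, LieHom.ad_pow_map,
    ad_pow_last_apply_of_lie_eq_pred (x := fun j => c (.inl j)) hc.lie_inr_false_inl]
  split_ifs <;> simp

theorem map_lie (hb : IsShiftBasis b) (hc : IsShiftBasis c)
    (f : M →ₗ[F] UniversalEnvelopingAlgebra F N)
    (hx : ∀ i, f (b (.inl i)) = ι F (c (.inl i))) (hlam : f (b (.inr false)) = ι F (c (.inr false)))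
    (ht : ∀ i, f ⁅b (.inr true), b (.inl i)⁆ = ⁅f (b (.inr true)), ι F (c (.inl i))⁆)
    (hlt : f ⁅b (.inr false), b (.inr true)⁆ = ⁅ι F (c (.inr false)), f (b (.inr true))⁆)
    (u v : M) : f ⁅u, v⁆ = ⁅f u, f v⁆ := by
  refine f.map_lie_of_basis_sum_bool b (fun i j => ?_) (fun s i => ?_) (by rwa [hlam]) u v
  · rw [hb.lie_inl_inl, map_zero, hx, hx, ← LieHom.map_lie, hc.lie_inl_inl, map_zero]
  · cases s
    · rw [hlam, hx, ← LieHom.map_lie, hb.lie_inr_false_inl, hc.lie_inr_false_inl]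
      split_ifs
      · simp only [map_zero]
      · exact hx _
    · rw [ht, hx]

theorem map_lie_of_eq_add_pow [ExpChar F p] (hb : IsShiftBasis b) (hc : IsShiftBasis c)
    (hbt : ∀ i : Fin (p + 1), ⁅b (.inr true), b (.inl i)⁆ =
      if (i : ℕ) = p then b (.inl ⟨0, Nat.succ_pos p⟩) else 0)
    (hblt : ⁅b (.inr false), b (.inr true)⁆ = 0) (hct : ∀ y : N, ⁅c (.inr true), y⁆ = 0)
    (f : M →ₗ[F] UniversalEnvelopingAlgebra F N)
    (hx : ∀ i, f (b (.inl i)) = ι F (c (.inl i))) (hlam : f (b (.inr false)) = ι F (c (.inr false)))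
    (ht : f (b (.inr true)) = ι F (c (.inr true)) + ι F (c (.inr false)) ^ p) (u v : M) :
    f ⁅u, v⁆ = ⁅f u, f v⁆ := by
  refine hb.map_lie hc f hx hlam (fun i => ?_) ?_ u v
  · rw [hbt, ht, add_lie, ← LieHom.map_lie, hct, map_zero, zero_add, hc.lie_ι_pow]
    split_ifs
    · exact hx _
    · exact map_zero f
  · rw [hblt, ht, lie_add, ← LieHom.map_lie, ← lie_skew, hct, neg_zero, map_zero, map_zero,
      zero_add, commute_iff_lie_eq.1 (Commute.self_pow _ p)]

theorem map_lie_of_eq_sub_pow [ExpChar F p] (hb : IsShiftBasis b) (hc : IsShiftBasis c)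
    (hbt : ∀ i : Fin (p + 1), ⁅b (.inr true), b (.inl i)⁆ =
      if (i : ℕ) = p then b (.inl ⟨0, Nat.succ_pos p⟩) else 0)
    (hblt : ⁅b (.inr false), b (.inr true)⁆ = 0) (hct : ∀ y : N, ⁅c (.inr true), y⁆ = 0)
    (g : N →ₗ[F] UniversalEnvelopingAlgebra F M)
    (hx : ∀ i, g (c (.inl i)) = ι F (b (.inl i))) (hlam : g (c (.inr false)) = ι F (b (.inr false)))
    (ht : g (c (.inr true)) = ι F (b (.inr true)) - ι F (b (.inr false)) ^ p) (u v : N) :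
    g ⁅u, v⁆ = ⁅g u, g v⁆ := by
  refine hc.map_lie hb g hx hlam (fun i => ?_) ?_ u v
  · rw [hct, map_zero, ht, sub_lie, ← LieHom.map_lie, hbt, hb.lie_ι_pow]
    split_ifs <;> simp
  · rw [← lie_skew, hct, neg_zero, map_zero, ht, lie_sub, ← LieHom.map_lie, hblt, map_zero,
      commute_iff_lie_eq.1 (Commute.self_pow _ p), sub_zero]

theorem exists_algEquiv_of_eq_add_pow [ExpChar F p] (hb : IsShiftBasis b) (hc : IsShiftBasis c)
    (hbt : ∀ i : Fin (p + 1), ⁅b (.inr true), b (.inl i)⁆ =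
      if (i : ℕ) = p then b (.inl ⟨0, Nat.succ_pos p⟩) else 0)
    (hblt : ⁅b (.inr false), b (.inr true)⁆ = 0) (hct : ∀ y : N, ⁅c (.inr true), y⁆ = 0)
    (f : M →ₗ[F] UniversalEnvelopingAlgebra F N)
    (hx : ∀ i, f (b (.inl i)) = ι F (c (.inl i))) (hlam : f (b (.inr false)) = ι F (c (.inr false)))
    (ht : f (b (.inr true)) = ι F (c (.inr true)) + ι F (c (.inr false)) ^ p) :
    ∃ e : UniversalEnvelopingAlgebra F M ≃ₐ[F] UniversalEnvelopingAlgebra F N,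
      ∀ a, e (ι F a) = f a := by
  let g : N →ₗ[F] UniversalEnvelopingAlgebra F M := c.constr F <| Sum.elim
    (fun i => ι F (b (.inl i)))
    (fun s => if s then ι F (b (.inr true)) - ι F (b (.inr false)) ^ p else ι F (b (.inr false)))
  have hgx : ∀ i, g (c (.inl i)) = ι F (b (.inl i)) := fun i => c.constr_basis F _ _
  have hglam : g (c (.inr false)) = ι F (b (.inr false)) := c.constr_basis F _ _
  have hgt : g (c (.inr true)) = ι F (b (.inr true)) - ι F (b (.inr false)) ^ p :=
    c.constr_basis F _ _
  let fL : M →ₗ⁅F⁆ UniversalEnvelopingAlgebra F N :=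
    { f with map_lie' := map_lie_of_eq_add_pow hb hc hbt hblt hct f hx hlam ht _ _ }
  let gL : N →ₗ⁅F⁆ UniversalEnvelopingAlgebra F M :=
    { g with map_lie' := map_lie_of_eq_sub_pow hb hc hbt hblt hct g hgx hglam hgt _ _ }
  have hfL : ∀ a, lift F fL (ι F a) = f a := lift_ι_apply F fL
  have hgL : ∀ a, lift F gL (ι F a) = g a := lift_ι_apply F gL
  refine ⟨AlgEquiv.ofAlgHom (lift F fL) (lift F gL) (lift_comp_lift_eq_id c gL fL ?_)
    (lift_comp_lift_eq_id b fL gL ?_), hfL⟩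
  · rintro (i | _ | _)
    · exact (congrArg _ (hgx i)).trans ((hfL _).trans (hx i))
    · exact (congrArg _ hglam).trans ((hfL _).trans hlam)
    · change lift F fL (g _) = _
      rw [hgt, map_sub, map_pow, hfL, hfL, ht, hlam, add_sub_cancel_right]
  · rintro (i | _ | _)
    · exact (congrArg _ (hx i)).trans ((hgL _).trans (hgx i))
    · exact (congrArg _ hlam).trans ((hgL _).trans hglam)
    · change lift F gL (f _) = _
      rw [ht, map_add, map_pow, hgL, hgL, hgt, hglam, sub_add_cancel]

end

theorem center_le_span_singleton {F : Type*} [Field F] {n : ℕ} {L : Type*}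
    [LieRing L] [LieAlgebra F L] {b : Module.Basis (Fin (n + 1) ⊕ Bool) F L} (hn : 2 ≤ n)
    (hb : IsShiftBasis b)
    (hbt : ∀ i : Fin (n + 1), ⁅b (.inr true), b (.inl i)⁆ =
      if (i : ℕ) = n then b (.inl ⟨0, Nat.succ_pos n⟩) else 0)
    (hblt : ⁅b (.inr false), b (.inr true)⁆ = 0) :
    (center F L : Submodule F L) ≤ F ∙ b (.inl 0) := by
  intro u hu
  -- up to sign, the `λ`-, `π`- and `x_j`-coordinates (`j ≠ 0`) of `u` are coordinates of
  -- `⁅x_n, u⁆` or `⁅λ, u⁆`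
  have hn0 : n ≠ 0 := by omega
  have hn1 : n - 1 ≠ 0 := by omega
  have hlam : b.repr u (.inr false) = 0 := by
    refine neg_eq_zero.1 (apply_eq_zero_of_mem_center b (b (.inl (Fin.last n)))
      (φ := -b.coord (.inr false)) (ψ := b.coord (.inl ⟨n - 1, by omega⟩)) (fun k => ?_) hu)
    rcases k with i | _ | _ <;>
      simp [← lie_skew (b (.inl (Fin.last n))), hb.lie_inl_inl, hb.lie_inr_false_inl, hbt,
        Fin.ext_iff, hn0, hn1]
  have htop : b.repr u (.inr true) = 0 := by
    refine neg_eq_zero.1 (apply_eq_zero_of_mem_center b (b (.inl (Fin.last n)))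
      (φ := -b.coord (.inr true)) (ψ := b.coord (.inl 0)) (fun k => ?_) hu)
    rcases k with i | _ | _ <;>
      simp [← lie_skew (b (.inl (Fin.last n))), hb.lie_inl_inl, hb.lie_inr_false_inl, hbt,
        Fin.ext_iff, hn0, hn1]
  have hx : ∀ j : Fin (n + 1), (j : ℕ) ≠ 0 → b.repr u (.inl j) = 0 := fun j hj => by
    refine apply_eq_zero_of_mem_center b (b (.inr false))
      (φ := b.coord (.inl j)) (ψ := b.coord (.inl ⟨j - 1, by omega⟩)) (fun k => ?_) hu
    rcases k with i | _ | _
    · by_cases hi : (i : ℕ) = 0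
      · simp [hb.lie_inr_false_inl, hi, Finsupp.single_apply]
        exact fun hij => hj (hij ▸ hi)
      · simp [hb.lie_inr_false_inl, hi, Finsupp.single_apply]
        exact if_congr (by rw [Fin.ext_iff]; omega) rfl rfl
    · simp
    · simp [hblt]
  refine Submodule.mem_span_singleton.2 ⟨b.repr u (.inl 0), b.ext_elem fun k => ?_⟩
  rcases k with j | _ | _
  · rcases eq_or_ne j 0 with rfl | hj
    · simp
    · simp [hj.symm, hx j (Fin.val_ne_iff.2 hj)]
  · simp [hlam]
  · simp [htop]

theorem not_nonempty_lieEquiv {F : Type*} [Field F] {n : ℕ} {L H : Type*}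
    [LieRing L] [LieAlgebra F L] [LieRing H] [LieAlgebra F H]
    {b : Module.Basis (Fin (n + 1) ⊕ Bool) F L} {c : Module.Basis (Fin (n + 1) ⊕ Bool) F H}
    (hn : 2 ≤ n) (hb : IsShiftBasis b)
    (hbt : ∀ i : Fin (n + 1), ⁅b (.inr true), b (.inl i)⁆ =
      if (i : ℕ) = n then b (.inl ⟨0, Nat.succ_pos n⟩) else 0)
    (hblt : ⁅b (.inr false), b (.inr true)⁆ = 0) (hc : IsShiftBasis c)
    (hct : ∀ y : H, ⁅c (.inr true), y⁆ = 0) : ¬Nonempty (L ≃ₗ⁅F⁆ H) := by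
  have hx0 : ad F H (c (.inl 0)) = 0 := c.ext fun m => by
    rcases m with j | _ | _ <;>
      simp [← lie_skew (c (.inl 0)), hc.lie_inl_inl, hc.lie_inr_false_inl, hct]
  let k : Bool → Fin (n + 1) ⊕ Bool := fun s => if s then .inr true else .inl 0
  refine not_nonempty_lieEquiv_of_center_le_span_singleton
    (hb.center_le_span_singleton hn hbt hblt) (κ := Bool) (by simp)
    (c.linearIndependent.comp k fun s t h => by cases s <;> cases t <;> simp_all [k]) fun s => ?_
  rw [LieModule.mem_maxTrivSubmodule]
  intro w
  rw [← lie_skew, neg_eq_zero]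
  cases s
  · exact LinearMap.congr_fun hx0 w
  · exact hct w

end IsShiftBasis

/-- with `L` and `H` the Lie algebras of Statement 14 (char `F = p > 0`;
`L` with basis `x_0, …, x_p, λ, π`, `[λ,x_i] = x_{i−1}`, `[π,x_i] = x_{i−p}`, `[λ,π] = 0`;
`H` with basis `x_0, …, x_p, λ, z`, `[λ,x_i] = x_{i−1}`, `z` central), the linear map
`Φ : L → U(H)` which is the identity on `A + Fλ` and sends `π ↦ z + λ^p` is a Lie algebra
homomorphism into `U(H)` (with commutator bracket), its extension `U(L) → U(H)` is an algebra
isomorphism, and yet `L ≇ H`. -/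
theorem envelopes_isomorphic_char_p (F : Type*) [Field F] (p : ℕ) (hp : p ≠ 0) [CharP F p]
    (L H : Type*) [LieRing L] [LieAlgebra F L] [LieRing H] [LieAlgebra F H]
    (b : Module.Basis (Fin (p + 1) ⊕ Bool) F L) (c : Module.Basis (Fin (p + 1) ⊕ Bool) F H)
    (hLA : ∀ i j : Fin (p + 1), ⁅b (.inl i), b (.inl j)⁆ = 0)
    (hLlam : ∀ i : Fin (p + 1), ⁅b (.inr false), b (.inl i)⁆ =
      if (i : ℕ) = 0 then 0
      else b (.inl ⟨(i : ℕ) - 1, lt_of_le_of_lt (Nat.sub_le _ _) i.isLt⟩))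
    (hLpi : ∀ i : Fin (p + 1), ⁅b (.inr true), b (.inl i)⁆ =
      if (i : ℕ) = p then b (.inl ⟨0, Nat.succ_pos p⟩) else 0)
    (hLlampi : ⁅b (.inr false), b (.inr true)⁆ = 0)
    (hHA : ∀ i j : Fin (p + 1), ⁅c (.inl i), c (.inl j)⁆ = 0)
    (hHlam : ∀ i : Fin (p + 1), ⁅c (.inr false), c (.inl i)⁆ =
      if (i : ℕ) = 0 then 0
      else c (.inl ⟨(i : ℕ) - 1, lt_of_le_of_lt (Nat.sub_le _ _) i.isLt⟩))
    (hHz : ∀ y : H, ⁅c (.inr true), y⁆ = 0) :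
    let Φ : L →ₗ[F] UniversalEnvelopingAlgebra F H := b.constr ℕ fun m =>
      match m with
      | .inl i => ι F (c (.inl i))
      | .inr false => ι F (c (.inr false))
      | .inr true => ι F (c (.inr true)) + (ι F (c (.inr false))) ^ p
    -- Φ is a Lie algebra homomorphism into U(H) with the commutator bracket
    (∀ u v : L, Φ ⁅u, v⁆ = Φ u * Φ v - Φ v * Φ u) ∧
    -- its extension to U(L) is an algebra isomorphism U(L) ≅ U(H)
    (∃ e : UniversalEnvelopingAlgebra F L ≃ₐ[F] UniversalEnvelopingAlgebra F H,
      ∀ a : L, e (ι F a) = Φ a) ∧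
    -- although L and H are not isomorphic Lie algebras
    ¬Nonempty (L ≃ₗ⁅F⁆ H) := by
  intro Φ
  have hprime : p.Prime := (CharP.char_is_prime_or_zero F p).resolve_right hp
  have : ExpChar F p := ExpChar.prime hprime
  have hb : IsShiftBasis b := ⟨hLA, hLlam⟩
  have hc : IsShiftBasis c := ⟨hHA, hHlam⟩
  have hx : ∀ i, Φ (b (.inl i)) = ι F (c (.inl i)) := fun i => b.constr_basis ℕ _ _
  have hlam : Φ (b (.inr false)) = ι F (c (.inr false)) := b.constr_basis ℕ _ _
  have hpi : Φ (b (.inr true)) = ι F (c (.inr true)) + ι F (c (.inr false)) ^ p :=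
    b.constr_basis ℕ _ _
  exact ⟨hb.map_lie_of_eq_add_pow hc hLpi hLlampi hHz Φ hx hlam hpi,
    hb.exists_algEquiv_of_eq_add_pow hc hLpi hLlampi hHz Φ hx hlam hpi,
    hb.not_nonempty_lieEquiv hprime.two_le hLpi hLlampi hc hHz⟩
end
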